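/- arXiv:1809.02576 — 2 statements merged into one kernel-verified Lean document; each statement's English description precedes it below -/
import Mathlib

section
/- For all integers k ≥ 1 and ℓ ≥ 0, the sequence n ↦ I(n,k,ℓ) (defined for n ≥ k) converges as n → ∞ to a limit in [0,1]. -/
open Filter

/-- The number of edges of `G` with both endpoints in `A`. -/
noncomputable def edgeCount {V : Type*} (G : SimpleGraph V) (A : Finset V) : ℕ :=
  {e ∈ G.edgeSet | ∀ v ∈ e, v ∈ A}.ncard

/-- The probability that a uniformly random `k`-element subset `A` of `Fin n`
satisfies the property `P`. -/
noncomputable def uniformProb (n k : ℕ) (P : Finset (Fin n) → Prop) : ℝ :=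
  ({A : Finset (Fin n) | A.card = k ∧ P A}.ncard : ℝ) / (n.choose k)

/-- `I(n, k, ℓ)`: the maximum, over all graphs `G` on `n` vertices, of the probability
that a uniformly random `k`-element subset of the vertices induces exactly `ℓ` edges. -/
noncomputable def maxInduceProb (n k ℓ : ℕ) : ℝ :=
  ⨆ G : SimpleGraph (Fin n), uniformProb n k (fun A => edgeCount G A = ℓ)

/-- `ind(k, ℓ) = lim_{n → ∞} I(n, k, ℓ)`. -/
noncomputable def ind (k ℓ : ℕ) : ℝ :=
  limUnder atTop (fun n => maxInduceProb n k ℓ)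

/-! Each `k`-subset of an `(n + 1)`-vertex graph `G` avoids exactly `n + 1 - k` vertices, and a
`k`-subset avoiding `v` is a `k`-subset of the `n`-vertex graph `G - v`. Double counting the pairs
`(v, A)` with `v ∉ A` therefore writes the probability for `G` as the average of the probabilities
for the graphs `G - v`, so `I(n + 1, k, ℓ) ≤ I(n, k, ℓ)`; a non-increasing sequence in `[0, 1]`
converges. -/

open Finset

lemma edgeCount_map {α β : Type*} (f : α ↪ β) (G : SimpleGraph β) (B : Finset α) :
    edgeCount G (B.map f) = edgeCount (G.comap f) B := by
  have hedges : {e ∈ G.edgeSet | ∀ v ∈ e, v ∈ B.map f}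
      = Sym2.map f '' {e ∈ (G.comap f).edgeSet | ∀ v ∈ e, v ∈ B} := by
    ext e
    constructor
    · induction e using Sym2.ind with
      | _ u v =>
      simp only [Set.mem_ofPred_eq, Sym2.forall_mem_pair, Finset.mem_map, SimpleGraph.mem_edgeSet]
      rintro ⟨h, ⟨x, hx, rfl⟩, ⟨y, hy, rfl⟩⟩
      exact ⟨s(x, y), ⟨h, Sym2.forall_mem_pair.2 ⟨hx, hy⟩⟩, rfl⟩
    · rintro ⟨e, ⟨he, hB⟩, rfl⟩
      induction e using Sym2.ind with
      | _ x y => simp_all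
  rw [edgeCount, edgeCount, hedges, Set.ncard_image_of_injective _ (Sym2.map.injective f.injective)]

lemma sum_card_filter_notMem_eq {V : Type*} [Fintype V] [DecidableEq V] {k : ℕ}
    (𝒜 : Finset (Finset V)) (h𝒜 : ∀ A ∈ 𝒜, #A = k) :
    ∑ v, #{A ∈ 𝒜 | v ∉ A} = #𝒜 * (Fintype.card V - k) := by
  calc ∑ v, #{A ∈ 𝒜 | v ∉ A}
      = ∑ A ∈ 𝒜, #{v | v ∉ A} :=
        sum_card_bipartiteAbove_eq_sum_card_bipartiteBelow (· ∉ ·)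
    _ = #𝒜 * (Fintype.card V - k) := sum_const_nat fun A hA => by
        rw [← sdiff_eq_filter, ← compl_eq_univ_sdiff, card_compl, h𝒜 A hA]

section InducingSets

variable {α β : Type*} [Fintype α] [Fintype β] [DecidableEq β]

noncomputable def inducingSets (G : SimpleGraph α) (k ℓ : ℕ) : Finset (Finset α) :=
  {A | #A = k ∧ edgeCount G A = ℓ}

lemma card_inducingSets_comap (f : α ↪ β) (G : SimpleGraph β) (k ℓ : ℕ) :
    #{A ∈ inducingSets G k ℓ | A ⊆ univ.map f} = #(inducingSets (G.comap f) k ℓ) := by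
  have himage : {A ∈ inducingSets G k ℓ | A ⊆ univ.map f}
      = (inducingSets (G.comap f) k ℓ).map (mapEmbedding f).toEmbedding := by
    ext A
    simp only [inducingSets, mem_filter, mem_univ, true_and, Finset.mem_map,
      RelEmbedding.coe_toEmbedding, mapEmbedding_apply]
    constructor
    · rintro ⟨⟨hk, hℓ⟩, hA⟩
      obtain ⟨B, -, rfl⟩ := subset_map_iff.1 hA
      exact ⟨B, ⟨by rwa [card_map] at hk, by rwa [edgeCount_map] at hℓ⟩, rfl⟩
    · rintro ⟨B, ⟨hk, hℓ⟩, rfl⟩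
      exact ⟨⟨by rwa [card_map], by rwa [edgeCount_map]⟩, map_subset_map.2 (subset_univ B)⟩
  rw [himage, card_map]

end InducingSets

variable {n k ℓ : ℕ}

lemma uniformProb_edgeCount_eq (G : SimpleGraph (Fin n)) :
    uniformProb n k (edgeCount G · = ℓ) = #(inducingSets G k ℓ) / n.choose k := by
  rw [uniformProb, inducingSets, ← Set.ncard_coe_finset, coe_filter_univ]

lemma uniformProb_le_maxInduceProb (G : SimpleGraph (Fin n)) :
    uniformProb n k (edgeCount G · = ℓ) ≤ maxInduceProb n k ℓ :=
  le_ciSup (f := fun G => uniformProb n k (edgeCount G · = ℓ)) (Set.finite_range _).bddAbove G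

lemma maxInduceProb_nonneg : 0 ≤ maxInduceProb n k ℓ :=
  (div_nonneg (Nat.cast_nonneg _) (Nat.cast_nonneg _)).trans (uniformProb_le_maxInduceProb ⊥)

lemma maxInduceProb_le_one (hk : k ≤ n) : maxInduceProb n k ℓ ≤ 1 := by
  refine ciSup_le fun G => ?_
  rw [uniformProb_edgeCount_eq, div_le_one (by exact_mod_cast Nat.choose_pos hk)]
  calc (#(inducingSets G k ℓ) : ℝ) ≤ #(powersetCard k (univ : Finset (Fin n))) := by
        gcongr
        intro A hA
        exact mem_powersetCard_univ.2 (mem_filter.1 hA).2.1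
    _ = n.choose k := by simp

lemma card_inducingSets_le (hk : k ≤ n) (G : SimpleGraph (Fin n)) :
    (#(inducingSets G k ℓ) : ℝ) ≤ maxInduceProb n k ℓ * n.choose k := by
  rw [← div_le_iff₀ (by exact_mod_cast Nat.choose_pos hk), ← uniformProb_edgeCount_eq]
  exact uniformProb_le_maxInduceProb G

lemma card_inducingSets_filter_notMem_le (hk : k ≤ n) (G : SimpleGraph (Fin (n + 1)))
    (v : Fin (n + 1)) :
    (#{A ∈ inducingSets G k ℓ | v ∉ A} : ℝ) ≤ maxInduceProb n k ℓ * n.choose k := by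
  have hnotMem (A : Finset (Fin (n + 1))) : v ∉ A ↔ A ⊆ univ.map v.succAboveEmb := by
    simp [subset_iff]
  simp_rw [hnotMem, card_inducingSets_comap]
  exact card_inducingSets_le hk _

theorem maxInduceProb_succ_le (hk : k ≤ n) :
    maxInduceProb (n + 1) k ℓ ≤ maxInduceProb n k ℓ := by
  refine ciSup_le fun G => ?_
  set 𝒜 := inducingSets G k ℓ
  have hcount : (#𝒜 : ℝ) * (n + 1 - k : ℕ) = ∑ v, (#{A ∈ 𝒜 | v ∉ A} : ℝ) := by
    have h𝒜 : ∀ A ∈ 𝒜, #A = k := fun A hA => (mem_filter.1 hA).2.1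
    rw [← Nat.cast_mul, ← Nat.cast_sum, sum_card_filter_notMem_eq 𝒜 h𝒜, Fintype.card_fin]
  have hbinom : ((n.choose k * (n + 1) : ℕ) : ℝ) = (n + 1).choose k * (n + 1 - k : ℕ) := by
    exact_mod_cast Nat.choose_mul_succ_eq n k
  rw [uniformProb_edgeCount_eq, div_le_iff₀ (by exact_mod_cast Nat.choose_pos (by omega))]
  refine le_of_mul_le_mul_right ?_ (by exact_mod_cast Nat.sub_pos_of_lt (by omega) :
    (0 : ℝ) < (n + 1 - k : ℕ))
  calc (#𝒜 : ℝ) * (n + 1 - k : ℕ) = ∑ v, (#{A ∈ 𝒜 | v ∉ A} : ℝ) := hcount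
    _ ≤ ∑ _v : Fin (n + 1), maxInduceProb n k ℓ * n.choose k :=
        sum_le_sum fun v _ => card_inducingSets_filter_notMem_le hk G v
    _ = maxInduceProb n k ℓ * ((n.choose k * (n + 1) : ℕ) : ℝ) := by
        simp only [sum_const, card_univ, Fintype.card_fin, nsmul_eq_mul]; push_cast; ring
    _ = maxInduceProb n k ℓ * (n + 1).choose k * (n + 1 - k : ℕ) := by rw [hbinom, mul_assoc]

theorem maxInduceProb_tendsto_general (k ℓ : ℕ) :
    ∃ L : ℝ, 0 ≤ L ∧ L ≤ 1 ∧
      Tendsto (fun n => maxInduceProb n k ℓ) atTop (nhds L) := by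
  set g : ℕ → ℝ := fun n => maxInduceProb (n + k) k ℓ
  have hg : Antitone g := antitone_nat_of_succ_le fun n =>
    (maxInduceProb_succ_le (Nat.le_add_left k n)).trans_eq' (by simp [g, Nat.add_right_comm])
  have hbdd : BddBelow (Set.range g) := ⟨0, Set.forall_mem_range.2 fun _ => maxInduceProb_nonneg⟩
  refine ⟨⨅ n, g n, le_ciInf fun _ => maxInduceProb_nonneg,
    (ciInf_le hbdd 0).trans (maxInduceProb_le_one (by omega)), ?_⟩
  rw [← tendsto_add_atTop_iff_nat k]
  exact tendsto_atTop_ciInf hg hbdd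

/-- For all `k ≥ 1` and `ℓ`, the sequence `n ↦ I(n, k, ℓ)` converges as `n → ∞`
to a limit lying in `[0, 1]`. -/
theorem maxInduceProb_tendsto (k ℓ : ℕ) (hk : 1 ≤ k) :
    ∃ L : ℝ, 0 ≤ L ∧ L ≤ 1 ∧
      Tendsto (fun n => maxInduceProb n k ℓ) atTop (nhds L) :=
  maxInduceProb_tendsto_general k ℓ
end

section
/- Let ℓ : ℕ → ℕ satisfy ℓ(k) → ∞ as k → ∞. For every ε > 0 there exists K such that for every k ≥ K there exists N(k) such that for all n ≥ N(k) the following holds: if G is a graph on n vertices containing more than 5·ℓ(k)^{2/3}·n/k vertices of degree at least n·ℓ(k)^{1/3}/k, and A is a uniformly random k-element subset of V(G), then Pr[e(A) = ℓ(k)] ≤ ε. -/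
open Filter Finset

lemma myDescFactorial_pos {s n : ℕ} (h : s ≤ n) : 0 < n.descFactorial s := by
  rw [Nat.descFactorial_eq_factorial_mul_choose]
  exact Nat.mul_pos s.factorial_pos (Nat.choose_pos h)

lemma myRatio_eq {s k n : ℕ} (hsk : s ≤ k) (hkn : k ≤ n) :
    ((n - s).choose (k - s) : ℝ) / (n.choose k : ℝ)
      = (k.descFactorial s : ℝ) / (n.descFactorial s : ℝ) := by
  have key : (n.choose k : ℝ) * (k.choose s) = (n.choose s) * ((n - s).choose (k - s)) := by
    exact_mod_cast congrArg (Nat.cast (R := ℝ)) (Nat.choose_mul (n := n) hsk)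
  have h1 : (k.descFactorial s : ℝ) = (s.factorial : ℝ) * (k.choose s : ℝ) := by
    exact_mod_cast congrArg (Nat.cast (R := ℝ)) (Nat.descFactorial_eq_factorial_mul_choose k s)
  have h2 : (n.descFactorial s : ℝ) = (s.factorial : ℝ) * (n.choose s : ℝ) := by
    exact_mod_cast congrArg (Nat.cast (R := ℝ)) (Nat.descFactorial_eq_factorial_mul_choose n s)
  have hc : (0:ℝ) < (n.choose k : ℝ) := by exact_mod_cast Nat.choose_pos hkn
  have hcs : (0:ℝ) < (n.choose s : ℝ) := by exact_mod_cast Nat.choose_pos (hsk.trans hkn)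
  have hf : (0:ℝ) < (s.factorial : ℝ) := by exact_mod_cast s.factorial_pos
  rw [h1, h2, div_eq_div_iff hc.ne' (by positivity)]
  nlinarith [key]

lemma myCount_supersets {n k : ℕ} (S : Finset (Fin n)) (hS : S.card ≤ k) :
    ((powersetCard k (univ : Finset (Fin n))).filter (fun A => S ⊆ A)).card
      = (n - S.card).choose (k - S.card) := by
  classical
  have hbij : ((powersetCard k (univ : Finset (Fin n))).filter (fun A => S ⊆ A)).card
      = (powersetCard (k - S.card) Sᶜ).card := by
    apply Finset.card_nbij' (fun A => A \ S) (fun B => B ∪ S)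
    · intro A hA
      simp only [mem_coe, mem_filter, mem_powersetCard_univ] at hA
      rw [mem_coe, mem_powersetCard]
      constructor
      · intro x hx
        have hx := mem_sdiff.mp hx
        simp [hx.2]
      · rw [card_sdiff_of_subset hA.2, hA.1]
    · intro B hB
      rw [mem_coe, mem_powersetCard] at hB
      have hdisj : Disjoint B S := by
        rw [Finset.disjoint_left]
        intro x hxB hxS
        have := hB.1 hxB
        simp only [mem_compl] at this
        exact this hxS
      simp only [mem_coe, mem_filter, mem_powersetCard_univ]
      refine ⟨?_, subset_union_right⟩
      rw [card_union_of_disjoint hdisj, hB.2, Nat.sub_add_cancel hS]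
    · intro A hA
      simp only [mem_coe, mem_filter] at hA
      exact sdiff_union_of_subset hA.2
    · intro B hB
      rw [mem_coe, mem_powersetCard] at hB
      have hdisj : Disjoint B S := by
        rw [Finset.disjoint_left]
        intro x hxB hxS
        have := hB.1 hxB
        simp only [mem_compl] at this
        exact this hxS
      exact union_sdiff_cancel_right hdisj
  rw [hbij, card_powersetCard, card_compl, Fintype.card_fin]

-- cast lemmas for small descFactorials
lemma myDesc2 {m : ℕ} (hm : 1 ≤ m) : ((m.descFactorial 2 : ℕ) : ℝ) = ((m:ℝ) - 1) * m := by
  have : m.descFactorial 2 = (m - 1) * m := by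
    rw [Nat.descFactorial_succ, Nat.descFactorial_one]
  rw [this, Nat.cast_mul, Nat.cast_sub hm]
  norm_num

lemma myDesc3 {m : ℕ} (hm : 2 ≤ m) : ((m.descFactorial 3 : ℕ) : ℝ)
    = ((m:ℝ) - 2) * (((m:ℝ) - 1) * m) := by
  have : m.descFactorial 3 = (m - 2) * ((m - 1) * m) := by
    rw [Nat.descFactorial_succ, Nat.descFactorial_succ, Nat.descFactorial_one]
  rw [this, Nat.cast_mul, Nat.cast_mul, Nat.cast_sub hm, Nat.cast_sub (le_trans (by norm_num) hm)]
  norm_num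

lemma myDesc4 {m : ℕ} (hm : 3 ≤ m) : ((m.descFactorial 4 : ℕ) : ℝ)
    = ((m:ℝ) - 3) * (((m:ℝ) - 2) * (((m:ℝ) - 1) * m)) := by
  have : m.descFactorial 4 = (m - 3) * ((m - 2) * ((m - 1) * m)) := by
    rw [Nat.descFactorial_succ, Nat.descFactorial_succ, Nat.descFactorial_succ,
      Nat.descFactorial_one]
  rw [this, Nat.cast_mul, Nat.cast_mul, Nat.cast_mul, Nat.cast_sub hm,
    Nat.cast_sub (le_trans (by norm_num) hm), Nat.cast_sub (le_trans (by norm_num) hm)]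
  norm_num


lemma myD2_le {kk nn : ℝ} (h5 : 5 ≤ kk) (hkn : kk ≤ nn) :
    ((kk - 1) * kk) / ((nn - 1) * nn) ≤ kk ^ 2 / nn ^ 2 := by
  have hk0 : (0:ℝ) < kk := by linarith
  have hn0 : (0:ℝ) < nn := by linarith
  have hd : (0:ℝ) < (nn - 1) * nn := mul_pos (by linarith) hn0
  rw [div_le_div_iff₀ hd (by positivity)]
  nlinarith [mul_nonneg (mul_nonneg hk0.le hn0.le) (sub_nonneg.mpr hkn)]

lemma myD3_le {kk nn : ℝ} (h5 : 5 ≤ kk) (hkn : kk ≤ nn) :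
    ((kk - 2) * ((kk - 1) * kk)) / ((nn - 2) * ((nn - 1) * nn)) ≤ kk ^ 3 / nn ^ 3 := by
  have hk0 : (0:ℝ) < kk := by linarith
  have hn0 : (0:ℝ) < nn := by linarith
  have hd : (0:ℝ) < (nn - 2) * ((nn - 1) * nn) :=
    mul_pos (by linarith) (mul_pos (by linarith) hn0)
  rw [div_le_div_iff₀ hd (by positivity)]
  have g1 : (kk - 2) * nn ≤ (nn - 2) * kk := by nlinarith
  have g2 : (kk - 1) * nn ≤ (nn - 1) * kk := by nlinarith
  calc (kk - 2) * ((kk - 1) * kk) * nn ^ 3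
      = ((kk - 2) * nn) * (((kk - 1) * nn) * (kk * nn)) := by ring
    _ ≤ ((nn - 2) * kk) * (((nn - 1) * kk) * (kk * nn)) := by
        apply mul_le_mul g1 _ _ (by nlinarith)
        · apply mul_le_mul_of_nonneg_right g2 (by positivity)
        · exact mul_nonneg (mul_nonneg (by linarith) hn0.le) (by positivity)
    _ = kk ^ 3 * ((nn - 2) * ((nn - 1) * nn)) := by ring

lemma myD4_le {kk nn : ℝ} (h5 : 5 ≤ kk) (hkn : kk ≤ nn) :
    ((kk - 3) * ((kk - 2) * ((kk - 1) * kk))) / ((nn - 3) * ((nn - 2) * ((nn - 1) * nn)))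
      ≤ (((kk - 1) * kk) / ((nn - 1) * nn)) ^ 2 := by
  have hk0 : (0:ℝ) < kk := by linarith
  have hn0 : (0:ℝ) < nn := by linarith
  have hd : (0:ℝ) < (nn - 3) * ((nn - 2) * ((nn - 1) * nn)) :=
    mul_pos (by linarith) (mul_pos (by linarith) (mul_pos (by linarith) hn0))
  have hd2 : (0:ℝ) < ((nn - 1) * nn) ^ 2 := by
    have : (0:ℝ) < (nn - 1) * nn := mul_pos (by linarith) hn0
    positivity
  rw [div_pow, div_le_div_iff₀ hd hd2]
  have g1 : (kk - 3) * (nn - 1) ≤ (nn - 3) * (kk - 1) := by nlinarith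
  have g2 : (kk - 2) * nn ≤ (nn - 2) * kk := by nlinarith
  have hR : (0:ℝ) ≤ ((kk - 1) * (nn - 1)) * (kk * nn) :=
    mul_nonneg (mul_nonneg (by linarith) (by linarith)) (by positivity)
  calc (kk - 3) * ((kk - 2) * ((kk - 1) * kk)) * ((nn - 1) * nn) ^ 2
      = (((kk - 3) * (nn - 1)) * ((kk - 2) * nn)) * (((kk - 1) * (nn - 1)) * (kk * nn)) := by
        ring
    _ ≤ (((nn - 3) * (kk - 1)) * ((nn - 2) * kk)) * (((kk - 1) * (nn - 1)) * (kk * nn)) := by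
        apply mul_le_mul_of_nonneg_right _ hR
        apply mul_le_mul g1 g2
          (mul_nonneg (by linarith) (by linarith))
          (mul_nonneg (by linarith) (by linarith))
    _ = ((kk - 1) * kk) ^ 2 * ((nn - 3) * ((nn - 2) * ((nn - 1) * nn))) := by ring


set_option maxHeartbeats 2000000 in
/-- If `ℓ(k) → ∞` and `G` has more than `5 ℓ(k)^{2/3} n/k` vertices of degree at least
`n ℓ(k)^{1/3}/k` ("heavy" vertices), then `Pr[e(A) = ℓ(k)] = o_k(1)` for a uniformly
random `k`-element subset `A`. -/
theorem many_heavy_vertices_implies_unlikely (ℓ : ℕ → ℕ)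
    (h : Tendsto ℓ atTop atTop) :
    ∀ ε : ℝ, 0 < ε → ∃ K : ℕ, ∀ k ≥ K, ∃ N : ℕ, ∀ n ≥ N,
      ∀ G : SimpleGraph (Fin n),
        5 * (ℓ k : ℝ) ^ ((2 : ℝ) / 3) * n / k <
            ({v : Fin n |
                (n : ℝ) * (ℓ k : ℝ) ^ ((1 : ℝ) / 3) / k ≤ ((G.neighborSet v).ncard : ℝ)}.ncard : ℝ) →
        uniformProb n k (fun A => edgeCount G A = ℓ k) ≤ ε := by
  classical
  intro ε hε
  obtain ⟨K₀, hK₀⟩ := (Filter.tendsto_atTop_atTop.mp h) (⌈(130 / ε) ^ 3⌉₊ + 1)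
  refine ⟨max K₀ 5, fun k hk => ⟨k, fun n hn G hG => ?_⟩⟩
  have hk5 : 5 ≤ k := le_of_max_le_right hk
  have hkn : k ≤ n := hn
  have hMl : ⌈(130 / ε) ^ 3⌉₊ + 1 ≤ ℓ k := hK₀ k (le_of_max_le_left hk)
  set a : ℝ := (ℓ k : ℝ) with ha
  have ha1 : (1:ℝ) ≤ a := by
    have h1 : 1 ≤ ℓ k := le_trans (Nat.le_add_left 1 _) hMl
    rw [ha]
    exact_mod_cast h1
  have ha0 : (0:ℝ) < a := lt_of_lt_of_le one_pos ha1
  have haM : (130 / ε) ^ 3 ≤ a := by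
    have h1 : ((130:ℝ) / ε) ^ 3 ≤ (⌈(130 / ε) ^ 3⌉₊ : ℝ) := Nat.le_ceil _
    have h2 : ((⌈(130 / ε) ^ 3⌉₊ : ℕ) : ℝ) ≤ a := by
      rw [ha]
      exact_mod_cast le_trans (Nat.le_succ _) hMl
    linarith
  set b : ℝ := a ^ ((1:ℝ)/3) with hbdef
  have hb1 : (1:ℝ) ≤ b := Real.one_le_rpow ha1 (by norm_num)
  have hb0 : (0:ℝ) < b := lt_of_lt_of_le one_pos hb1
  have hb3 : b ^ 3 = a := by
    rw [hbdef, ← Real.rpow_natCast (a ^ ((1:ℝ)/3)) 3, ← Real.rpow_mul ha0.le]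
    norm_num
  have hb2 : a ^ ((2:ℝ)/3) = b ^ 2 := by
    rw [hbdef, ← Real.rpow_natCast (a ^ ((1:ℝ)/3)) 2, ← Real.rpow_mul ha0.le]
    norm_num
  have hεb : 130 / ε ≤ b := by
    have h3 : (130 / ε) ^ 3 ≤ b ^ 3 := by rw [hb3]; exact haM
    exact le_of_pow_le_pow_left₀ (by norm_num) hb0.le h3
  have hk0 : (0:ℝ) < (k:ℝ) := by
    have : (0:ℕ) < k := lt_of_lt_of_le (by norm_num) hk5
    exact_mod_cast this
  have hn0 : (0:ℝ) < (n:ℝ) := lt_of_lt_of_le hk0 (by exact_mod_cast hkn)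
  have hknR : (k:ℝ) ≤ (n:ℝ) := by exact_mod_cast hkn
  have hk5R : (5:ℝ) ≤ (k:ℝ) := by exact_mod_cast hk5
  have hn5R : (5:ℝ) ≤ (n:ℝ) := le_trans hk5R hknR
  -- the heavy vertex set as a Finset
  set heavyF : Finset (Fin n) :=
    univ.filter (fun v => (n : ℝ) * b / k ≤ ((G.neighborSet v).ncard : ℝ)) with hheavy
  have hGc : 5 * b ^ 2 * (n:ℝ) / k < (heavyF.card : ℝ) := by
    have hset : {v : Fin n | (n : ℝ) * b / k ≤ ((G.neighborSet v).ncard : ℝ)}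
        = (heavyF : Set (Fin n)) := by
      ext v
      simp [hheavy]
    rw [hb2] at hG
    rw [hset, Set.ncard_coe_finset] at hG
    exact hG
  have hdegree : ∀ v ∈ heavyF, (n:ℝ) * b / k ≤ ((G.neighborFinset v).card : ℝ) := by
    intro v hv
    rw [hheavy, mem_filter] at hv
    have hnc : (G.neighborSet v).ncard = (G.neighborFinset v).card := by
      rw [Set.ncard_eq_toFinset_card']
      rfl
    rw [← hnc]
    exact hv.2
  -- parameters
  set d : ℕ := ⌈(n:ℝ) * b / k⌉₊ with hd
  set h' : ℕ := ⌈5 * b ^ 2 * (n:ℝ) / k⌉₊ with hh'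
  have hx1 : (1:ℝ) ≤ (n:ℝ) * b / k := by
    rw [le_div_iff₀ hk0]
    nlinarith
  have hb2one : (1:ℝ) ≤ b ^ 2 := by nlinarith
  have hy5 : (5:ℝ) ≤ 5 * b ^ 2 * (n:ℝ) / k := by
    rw [le_div_iff₀ hk0]
    nlinarith [mul_nonneg (show (0:ℝ) ≤ b ^ 2 - 1 by linarith) hn0.le]
  have hdlow : (n:ℝ) * b / k ≤ (d:ℝ) := Nat.le_ceil _
  have hdhigh : (d:ℝ) ≤ 2 * ((n:ℝ) * b / k) := by
    have := Nat.ceil_lt_add_one (show (0:ℝ) ≤ (n:ℝ) * b / k by positivity)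
    rw [← hd] at this
    linarith
  have hh'low : 5 * b ^ 2 * (n:ℝ) / k ≤ (h':ℝ) := Nat.le_ceil _
  have hh'high : (h':ℝ) ≤ 2 * (5 * b ^ 2 * (n:ℝ) / k) := by
    have := Nat.ceil_lt_add_one (show (0:ℝ) ≤ 5 * b ^ 2 * (n:ℝ) / k by positivity)
    rw [← hh'] at this
    linarith
  have hH'le : h' ≤ heavyF.card := by
    rw [hh']
    exact Nat.ceil_le.mpr hGc.le
  obtain ⟨H', hH'sub, hH'card⟩ := Finset.exists_subset_card_eq hH'le
  have hdeg : ∀ v ∈ heavyF, d ≤ (G.neighborFinset v).card := by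
    intro v hv
    rw [hd]
    exact Nat.ceil_le.mpr (hdegree v hv)
  -- choose exactly d neighbors of each vertex
  have hN'ex : ∀ v : Fin n, ∃ t, t ⊆ G.neighborFinset v ∧
      (d ≤ (G.neighborFinset v).card → t.card = d) ∧ t.card ≤ d := by
    intro v
    by_cases hv : d ≤ (G.neighborFinset v).card
    · obtain ⟨t, ht, htc⟩ := Finset.exists_subset_card_eq hv
      exact ⟨t, ht, fun _ => htc, htc.le⟩
    · exact ⟨∅, empty_subset _, fun hc => absurd hc hv, by simp⟩
  choose N' hN'sub hN'card hN'le using hN'ex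
  have hN'cardH : ∀ u ∈ H', (N' u).card = d := fun u hu => hN'card u (hdeg u (hH'sub hu))
  -- the index set of directed pairs
  set I : Finset (Fin n × Fin n) := H'.biUnion (fun u => (N' u).image (fun v => (u, v))) with hI
  have hmemI : ∀ p : Fin n × Fin n, p ∈ I ↔ p.1 ∈ H' ∧ p.2 ∈ N' p.1 := by
    intro p
    rw [hI, mem_biUnion]
    constructor
    · rintro ⟨u, hu, hp⟩
      rw [mem_image] at hp
      obtain ⟨v, hv, rfl⟩ := hp
      exact ⟨hu, hv⟩
    · rintro ⟨h1, h2⟩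
      exact ⟨p.1, h1, mem_image.mpr ⟨p.2, h2, rfl⟩⟩
  have hIcard : I.card = h' * d := by
    rw [hI, card_biUnion (fun u hu v hv huv => ?_)]
    · have hcong : ∀ u ∈ H', (Finset.image (fun v => (u, v)) (N' u)).card = d := by
        intro u hu
        rw [Finset.card_image_of_injective _
          (fun x y hxy => ((Prod.mk.injEq _ _ _ _).mp hxy).2)]
        exact hN'cardH u hu
      rw [Finset.sum_congr rfl hcong, sum_const, smul_eq_mul, hH'card]
    · rw [Function.onFun, Finset.disjoint_left]
      intro p hp hq
      rw [mem_image] at hp hq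
      obtain ⟨x, _, rfl⟩ := hp
      obtain ⟨y, _, hy⟩ := hq
      exact huv (congrArg Prod.fst hy).symm
  have hIadj : ∀ p ∈ I, G.Adj p.1 p.2 := by
    intro p hp
    have := (hmemI p).mp hp
    exact (SimpleGraph.mem_neighborFinset _ _ _).mp (hN'sub p.1 this.2)
  have hIne : ∀ p ∈ I, p.1 ≠ p.2 := fun p hp => (hIadj p hp).ne

  -- the probability space
  set Om : Finset (Finset (Fin n)) := powersetCard k (univ : Finset (Fin n)) with hOm
  set Z : Finset (Fin n) → ℕ := fun A => (I.filter (fun p => p.1 ∈ A ∧ p.2 ∈ A)).card with hZ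
  have hOmcard : ((Om.card : ℕ) : ℝ) = (n.choose k : ℝ) := by
    rw [hOm, card_powersetCard, card_univ, Fintype.card_fin]
  have hc0 : (0:ℝ) < (n.choose k : ℝ) := by exact_mod_cast Nat.choose_pos hkn
  -- edge bound : Z A ≤ 2 * edgeCount G A
  have hZedge : ∀ A : Finset (Fin n), Z A ≤ 2 * edgeCount G A := by
    intro A
    set s : Finset (Fin n × Fin n) := I.filter (fun p => p.1 ∈ A ∧ p.2 ∈ A) with hs
    set EA : Finset (Sym2 (Fin n)) :=
      univ.filter (fun e => e ∈ G.edgeSet ∧ ∀ w ∈ e, w ∈ A) with hEA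
    have hEC : edgeCount G A = EA.card := by
      rw [edgeCount, show {e ∈ G.edgeSet | ∀ v ∈ e, v ∈ A} = (EA : Set (Sym2 (Fin n))) by
        ext e; simp [hEA], Set.ncard_coe_finset]
    have himg : s.image (fun p => Sym2.mk p.1 p.2) ⊆ EA := by
      intro e he
      rw [mem_image] at he
      obtain ⟨p, hp, rfl⟩ := he
      rw [hs, mem_filter] at hp
      rw [hEA, mem_filter]
      refine ⟨mem_univ _, ?_, ?_⟩
      · have : Sym2.mk p.1 p.2 = s(p.1, p.2) := rfl
        rw [this, SimpleGraph.mem_edgeSet]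
        exact hIadj p hp.1
      · intro w hw
        have : Sym2.mk p.1 p.2 = s(p.1, p.2) := rfl
        rw [this, Sym2.mem_iff] at hw
        rcases hw with rfl | rfl
        · exact hp.2.1
        · exact hp.2.2
    have hfib : ∀ e ∈ s.image (fun p => Sym2.mk p.1 p.2),
        (s.filter (fun p => Sym2.mk p.1 p.2 = e)).card ≤ 2 := by
      intro e he
      rw [mem_image] at he
      obtain ⟨q, hq, rfl⟩ := he
      have hsub : s.filter (fun p => Sym2.mk p.1 p.2 = Sym2.mk q.1 q.2) ⊆ {q, q.swap} := by
        intro p hp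
        rw [mem_filter] at hp
        have := Sym2.mk_eq_mk_iff.mp (show s(p.1, p.2) = s(q.1, q.2) from hp.2)
        simp only [mem_insert, mem_singleton]
        exact this
      exact le_trans (card_le_card hsub) (le_trans (card_insert_le _ _) (by simp))
    calc Z A = s.card := by rw [hZ]
      _ ≤ 2 * (s.image (fun p => Sym2.mk p.1 p.2)).card := Finset.card_le_mul_card_image s 2 hfib
      _ ≤ 2 * EA.card := Nat.mul_le_mul_left 2 (card_le_card himg)
      _ = 2 * edgeCount G A := by rw [hEC]
  -- the basic counts
  set c2 : ℝ := (((n-2).choose (k-2) : ℕ) : ℝ) with hc2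
  set c3 : ℝ := (((n-3).choose (k-3) : ℕ) : ℝ) with hc3
  set c4 : ℝ := (((n-4).choose (k-4) : ℕ) : ℝ) with hc4
  have hc2nn : (0:ℝ) ≤ c2 := hc2 ▸ Nat.cast_nonneg _
  have hc3nn : (0:ℝ) ≤ c3 := hc3 ▸ Nat.cast_nonneg _
  have hc4nn : (0:ℝ) ≤ c4 := hc4 ▸ Nat.cast_nonneg _
  set m : ℝ := ((I.card : ℕ) : ℝ) with hmdef
  have hmnn : (0:ℝ) ≤ m := hmdef ▸ Nat.cast_nonneg _
  have hmval : m = (h' : ℝ) * (d : ℝ) := by rw [hmdef, hIcard]; push_cast; ring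
  -- first moment
  have hcount2 : ∀ p ∈ I, (Om.filter (fun A => p.1 ∈ A ∧ p.2 ∈ A)).card
      = (n-2).choose (k-2) := by
    intro p hp
    have hpair : ({p.1, p.2} : Finset (Fin n)).card = 2 := card_pair (hIne p hp)
    have hms := myCount_supersets ({p.1, p.2} : Finset (Fin n))
      (le_trans hpair.le (show 2 ≤ k by omega))
    rw [hpair] at hms
    rw [← hms, hOm]
    congr 1
    apply filter_congr
    intro A _
    simp [insert_subset_iff]
  have hmom1 : ∑ A ∈ Om, (Z A : ℝ) = m * c2 := by
    have hswap : ∀ A ∈ Om, (Z A : ℝ) = ∑ p ∈ I, (if p.1 ∈ A ∧ p.2 ∈ A then (1:ℝ) else 0) := by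
      intro A _
      simp only [hZ]
      rw [Finset.sum_boole]
    rw [Finset.sum_congr rfl hswap, Finset.sum_comm]
    have hterm : ∀ p ∈ I, (∑ A ∈ Om, if p.1 ∈ A ∧ p.2 ∈ A then (1:ℝ) else 0)
        = c2 := by
      intro p hp
      rw [Finset.sum_boole, hc2]
      exact_mod_cast congrArg (Nat.cast (R := ℝ)) (hcount2 p hp)
    rw [Finset.sum_congr rfl hterm, sum_const, nsmul_eq_mul, hmdef]
  -- second moment
  set cnt : (Fin n × Fin n) × (Fin n × Fin n) → ℕ := fun r =>
    (Om.filter (fun A => (r.1.1 ∈ A ∧ r.1.2 ∈ A) ∧ (r.2.1 ∈ A ∧ r.2.2 ∈ A))).card with hcnt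
  have hmono : ∀ (r : (Fin n × Fin n) × (Fin n × Fin n)) (T : Finset (Fin n)),
      (∀ A : Finset (Fin n), ((r.1.1 ∈ A ∧ r.1.2 ∈ A) ∧ (r.2.1 ∈ A ∧ r.2.2 ∈ A)) → T ⊆ A) →
      T.card ≤ k → cnt r ≤ (n - T.card).choose (k - T.card) := by
    intro r T himp hTk
    rw [← myCount_supersets T hTk, hcnt, hOm]
    apply card_le_card
    intro A hA
    rw [mem_filter] at hA ⊢
    exact ⟨hA.1, himp A hA.2⟩
  have hZsum2 : ∑ A ∈ Om, (Z A : ℝ)^2 = ∑ r ∈ I ×ˢ I, (cnt r : ℝ) := by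
    have hsq : ∀ A ∈ Om, (Z A : ℝ)^2 = ∑ r ∈ I ×ˢ I,
        (if (r.1.1 ∈ A ∧ r.1.2 ∈ A) ∧ (r.2.1 ∈ A ∧ r.2.2 ∈ A) then (1:ℝ) else 0) := by
      intro A _
      have hz : (Z A : ℝ) = ∑ p ∈ I, (if p.1 ∈ A ∧ p.2 ∈ A then (1:ℝ) else 0) := by
        simp only [hZ]
        rw [Finset.sum_boole]
      rw [hz, sq, Finset.sum_mul_sum, Finset.sum_product]
      apply Finset.sum_congr rfl
      intro p _
      apply Finset.sum_congr rfl
      intro q _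
      by_cases h1 : (p.1 ∈ A ∧ p.2 ∈ A) <;> by_cases h2 : (q.1 ∈ A ∧ q.2 ∈ A) <;>
        simp [h1, h2]
    rw [Finset.sum_congr rfl hsq, Finset.sum_comm]
    apply Finset.sum_congr rfl
    intro r _
    rw [Finset.sum_boole, hcnt]

  -- pointwise bounds on cnt
  have hswap_eq : ∀ p : Fin n × Fin n, p.swap = (p.2, p.1) := fun p => rfl
  have hb2pt : ∀ r ∈ (I ×ˢ I).filter (fun r => r.2 = r.1 ∨ r.2 = r.1.swap),
      (cnt r : ℝ) ≤ c2 := by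
    intro r hr
    rw [mem_filter] at hr
    obtain ⟨hp, hq⟩ := Finset.mem_product.mp hr.1
    have hpne := hIne _ hp
    have hT : ({r.1.1, r.1.2} : Finset (Fin n)).card = 2 := card_pair hpne
    have himp : ∀ A : Finset (Fin n), ((r.1.1 ∈ A ∧ r.1.2 ∈ A) ∧ (r.2.1 ∈ A ∧ r.2.2 ∈ A))
        → ({r.1.1, r.1.2} : Finset (Fin n)) ⊆ A := by
      intro A hA
      rw [insert_subset_iff, singleton_subset_iff]
      exact ⟨hA.1.1, hA.1.2⟩
    have hb := hmono r _ himp (le_trans hT.le (show 2 ≤ k by omega))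
    rw [hT] at hb
    rw [hc2]
    exact_mod_cast hb
  have hb3pt : ∀ r ∈ ((I ×ˢ I).filter (fun r => ¬(r.2 = r.1 ∨ r.2 = r.1.swap))).filter
      (fun r => r.2.1 = r.1.1 ∨ r.2.1 = r.1.2 ∨ r.2.2 = r.1.1 ∨ r.2.2 = r.1.2),
      (cnt r : ℝ) ≤ c3 := by
    intro r hr
    rw [mem_filter, mem_filter] at hr
    obtain ⟨⟨hrI, hnot⟩, _⟩ := hr
    obtain ⟨hp, hq⟩ := Finset.mem_product.mp hrI
    have hpne := hIne _ hp
    have hqne := hIne _ hq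
    push_neg at hnot
    have hw : ∃ w : Fin n, (w = r.2.1 ∨ w = r.2.2) ∧ w ≠ r.1.1 ∧ w ≠ r.1.2 := by
      by_cases h1 : r.2.1 = r.1.1 ∨ r.2.1 = r.1.2
      · refine ⟨r.2.2, Or.inr rfl, ?_, ?_⟩
        · intro hcx
          rcases h1 with h1 | h1
          · exact hqne (h1.trans hcx.symm)
          · exact hnot.2 (by rw [hswap_eq]; exact Prod.ext_iff.mpr ⟨h1, hcx⟩)
        · intro hcx
          rcases h1 with h1 | h1
          · exact hnot.1 (Prod.ext_iff.mpr ⟨h1, hcx⟩)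
          · exact hqne (h1.trans hcx.symm)
      · push_neg at h1
        exact ⟨r.2.1, Or.inl rfl, h1.1, h1.2⟩
    obtain ⟨w, hwor, hw1, hw2⟩ := hw
    have hT : (insert w {r.1.1, r.1.2} : Finset (Fin n)).card = 3 := by
      rw [card_insert_of_notMem (by simp [hw1, hw2]), card_pair hpne]
    have himp : ∀ A : Finset (Fin n), ((r.1.1 ∈ A ∧ r.1.2 ∈ A) ∧ (r.2.1 ∈ A ∧ r.2.2 ∈ A))
        → (insert w {r.1.1, r.1.2} : Finset (Fin n)) ⊆ A := by
      intro A hA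
      rw [insert_subset_iff, insert_subset_iff, singleton_subset_iff]
      refine ⟨?_, hA.1.1, hA.1.2⟩
      rcases hwor with rfl | rfl
      · exact hA.2.1
      · exact hA.2.2
    have hb := hmono r _ himp (le_trans hT.le (show 3 ≤ k by omega))
    rw [hT] at hb
    rw [hc3]
    exact_mod_cast hb
  have hb4pt : ∀ r ∈ ((I ×ˢ I).filter (fun r => ¬(r.2 = r.1 ∨ r.2 = r.1.swap))).filter
      (fun r => ¬(r.2.1 = r.1.1 ∨ r.2.1 = r.1.2 ∨ r.2.2 = r.1.1 ∨ r.2.2 = r.1.2)),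
      (cnt r : ℝ) ≤ c4 := by
    intro r hr
    rw [mem_filter, mem_filter] at hr
    obtain ⟨⟨hrI, _⟩, hnsh⟩ := hr
    obtain ⟨hp, hq⟩ := Finset.mem_product.mp hrI
    have hpne := hIne _ hp
    have hqne := hIne _ hq
    push_neg at hnsh
    obtain ⟨h11, h12, h21, h22⟩ := hnsh
    have hT : (insert r.1.1 (insert r.1.2 (insert r.2.1 ({r.2.2} : Finset (Fin n))))).card
        = 4 := by
      rw [card_insert_of_notMem (by
        simp only [mem_insert, mem_singleton, not_or]
        exact ⟨hpne, Ne.symm h11, Ne.symm h21⟩)]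
      rw [card_insert_of_notMem (by
        simp only [mem_insert, mem_singleton, not_or]
        exact ⟨Ne.symm h12, Ne.symm h22⟩)]
      rw [card_insert_of_notMem (by simp [hqne]), card_singleton]
    have himp : ∀ A : Finset (Fin n), ((r.1.1 ∈ A ∧ r.1.2 ∈ A) ∧ (r.2.1 ∈ A ∧ r.2.2 ∈ A))
        → insert r.1.1 (insert r.1.2 (insert r.2.1 ({r.2.2} : Finset (Fin n)))) ⊆ A := by
      intro A hA
      rw [insert_subset_iff, insert_subset_iff, insert_subset_iff, singleton_subset_iff]
      exact ⟨hA.1.1, hA.1.2, hA.2.1, hA.2.2⟩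
    have hb := hmono r _ himp (le_trans hT.le (show 4 ≤ k by omega))
    rw [hT] at hb
    rw [hc4]
    exact_mod_cast hb
  -- cardinality bounds for the three classes
  have hcardA : ((I ×ˢ I).filter (fun r => r.2 = r.1 ∨ r.2 = r.1.swap)).card
      ≤ 2 * I.card := by
    apply Finset.card_le_mul_card_image_of_maps_to (f := Prod.fst) (t := I)
    · intro r hr
      exact (Finset.mem_product.mp (mem_filter.mp hr).1).1
    · intro p _
      have hsub : ((I ×ˢ I).filter (fun r => r.2 = r.1 ∨ r.2 = r.1.swap)).filter
          (fun r => r.1 = p) ⊆ ({(p, p), (p, p.swap)} : Finset _) := by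
        intro r hr
        rw [mem_filter, mem_filter] at hr
        obtain ⟨⟨_, hor⟩, hfst⟩ := hr
        simp only [mem_insert, mem_singleton]
        rcases hor with h | h
        · exact Or.inl (Prod.ext_iff.mpr ⟨hfst, by rw [h, hfst]⟩)
        · exact Or.inr (Prod.ext_iff.mpr ⟨hfst, by rw [h, hfst]⟩)
      exact le_trans (card_le_card hsub) (le_trans (card_insert_le _ _) (by simp))
  have hfib1 : ∀ w : Fin n, (I.filter (fun q => q.1 = w)).card ≤ d := by
    intro w
    refine le_trans (Finset.card_le_card_of_injOn Prod.snd ?_ ?_) (hN'le w)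
    · intro q hq
      rw [mem_coe, mem_filter] at hq
      have hmem := (hmemI q).mp hq.1
      rw [← hq.2]
      exact hmem.2
    · intro q hq q' hq' hqq
      rw [Finset.mem_coe, mem_filter] at hq hq'
      exact Prod.ext_iff.mpr ⟨hq.2.trans hq'.2.symm, hqq⟩
  have hfib2 : ∀ w : Fin n, (I.filter (fun q => q.2 = w)).card ≤ h' := by
    intro w
    rw [← hH'card]
    refine Finset.card_le_card_of_injOn Prod.fst ?_ ?_
    · intro q hq
      rw [mem_coe, mem_filter] at hq
      exact ((hmemI q).mp hq.1).1
    · intro q hq q' hq' hqq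
      rw [Finset.mem_coe, mem_filter] at hq hq'
      exact Prod.ext_iff.mpr ⟨hqq, hq.2.trans hq'.2.symm⟩
  have hQp : ∀ p : Fin n × Fin n,
      (I.filter (fun q => q.1 = p.1 ∨ q.1 = p.2 ∨ q.2 = p.1 ∨ q.2 = p.2)).card
      ≤ 2 * d + 2 * h' := by
    intro p
    have hsub : I.filter (fun q => q.1 = p.1 ∨ q.1 = p.2 ∨ q.2 = p.1 ∨ q.2 = p.2)
        ⊆ ((I.filter (fun q => q.1 = p.1) ∪ I.filter (fun q => q.1 = p.2))
           ∪ (I.filter (fun q => q.2 = p.1) ∪ I.filter (fun q => q.2 = p.2))) := by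
      intro q hq
      rw [mem_filter] at hq
      simp only [mem_union, mem_filter]
      rcases hq.2 with hx | hx | hx | hx
      · exact Or.inl (Or.inl ⟨hq.1, hx⟩)
      · exact Or.inl (Or.inr ⟨hq.1, hx⟩)
      · exact Or.inr (Or.inl ⟨hq.1, hx⟩)
      · exact Or.inr (Or.inr ⟨hq.1, hx⟩)
    have h1 := card_le_card hsub
    have h2 := card_union_le (I.filter (fun q => q.1 = p.1) ∪ I.filter (fun q => q.1 = p.2))
      (I.filter (fun q => q.2 = p.1) ∪ I.filter (fun q => q.2 = p.2))
    have h3 := card_union_le (I.filter (fun q => q.1 = p.1)) (I.filter (fun q => q.1 = p.2))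
    have h4 := card_union_le (I.filter (fun q => q.2 = p.1)) (I.filter (fun q => q.2 = p.2))
    have h5 := hfib1 p.1
    have h6 := hfib1 p.2
    have h7 := hfib2 p.1
    have h8 := hfib2 p.2
    omega
  have hcardB : (((I ×ˢ I).filter (fun r => ¬(r.2 = r.1 ∨ r.2 = r.1.swap))).filter
      (fun r => r.2.1 = r.1.1 ∨ r.2.1 = r.1.2 ∨ r.2.2 = r.1.1 ∨ r.2.2 = r.1.2)).card
      ≤ (2 * d + 2 * h') * I.card := by
    apply Finset.card_le_mul_card_image_of_maps_to (f := Prod.fst) (t := I)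
    · intro r hr
      exact (Finset.mem_product.mp (mem_filter.mp (mem_filter.mp hr).1).1).1
    · intro p _
      refine le_trans (Finset.card_le_card_of_injOn Prod.snd ?_ ?_) (hQp p)
      · intro r hr
        rw [mem_coe, mem_filter, mem_filter, mem_filter] at hr
        obtain ⟨⟨⟨hrI, _⟩, hsh⟩, hfst⟩ := hr
        rw [mem_coe, mem_filter]
        refine ⟨(Finset.mem_product.mp hrI).2, ?_⟩
        rw [hfst] at hsh
        exact hsh
      · intro r hr r' hr' hqq
        rw [Finset.mem_coe, mem_filter] at hr hr'
        exact Prod.ext_iff.mpr ⟨hr.2.trans hr'.2.symm, hqq⟩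
  have hcardC : (((I ×ˢ I).filter (fun r => ¬(r.2 = r.1 ∨ r.2 = r.1.swap))).filter
      (fun r => ¬(r.2.1 = r.1.1 ∨ r.2.1 = r.1.2 ∨ r.2.2 = r.1.1 ∨ r.2.2 = r.1.2))).card
      ≤ I.card * I.card := by
    refine le_trans (card_filter_le _ _) (le_trans (card_filter_le _ _) ?_)
    rw [card_product]
  -- assembling the second moment bound
  have hmom2 : ∑ A ∈ Om, (Z A : ℝ)^2
      ≤ 2 * m * c2 + ((2 * (d:ℝ) + 2 * (h':ℝ)) * m * c3 + m^2 * c4) := by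
    rw [hZsum2]
    rw [← Finset.sum_filter_add_sum_filter_not (I ×ˢ I)
      (fun r => r.2 = r.1 ∨ r.2 = r.1.swap) (fun r => (cnt r : ℝ))]
    rw [← Finset.sum_filter_add_sum_filter_not
      ((I ×ˢ I).filter (fun r => ¬(r.2 = r.1 ∨ r.2 = r.1.swap)))
      (fun r => r.2.1 = r.1.1 ∨ r.2.1 = r.1.2 ∨ r.2.2 = r.1.1 ∨ r.2.2 = r.1.2)
      (fun r => (cnt r : ℝ))]
    have hs1 : ∑ r ∈ (I ×ˢ I).filter (fun r => r.2 = r.1 ∨ r.2 = r.1.swap), (cnt r : ℝ)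
        ≤ 2 * m * c2 := by
      refine le_trans (Finset.sum_le_card_nsmul _ _ c2 hb2pt) ?_
      rw [nsmul_eq_mul]
      have : (((I ×ˢ I).filter (fun r => r.2 = r.1 ∨ r.2 = r.1.swap)).card : ℝ)
          ≤ 2 * m := by
        rw [hmdef]
        exact_mod_cast hcardA
      exact mul_le_mul_of_nonneg_right this hc2nn
    have hs2 : ∑ r ∈ ((I ×ˢ I).filter (fun r => ¬(r.2 = r.1 ∨ r.2 = r.1.swap))).filter
        (fun r => r.2.1 = r.1.1 ∨ r.2.1 = r.1.2 ∨ r.2.2 = r.1.1 ∨ r.2.2 = r.1.2), (cnt r : ℝ)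
        ≤ (2 * (d:ℝ) + 2 * (h':ℝ)) * m * c3 := by
      refine le_trans (Finset.sum_le_card_nsmul _ _ c3 hb3pt) ?_
      rw [nsmul_eq_mul]
      have hcc : ((((I ×ˢ I).filter (fun r => ¬(r.2 = r.1 ∨ r.2 = r.1.swap))).filter
          (fun r => r.2.1 = r.1.1 ∨ r.2.1 = r.1.2 ∨ r.2.2 = r.1.1 ∨ r.2.2 = r.1.2)).card : ℝ)
          ≤ (2 * (d:ℝ) + 2 * (h':ℝ)) * m := by
        rw [hmdef]
        exact_mod_cast hcardB
      exact mul_le_mul_of_nonneg_right hcc hc3nn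
    have hs3 : ∑ r ∈ ((I ×ˢ I).filter (fun r => ¬(r.2 = r.1 ∨ r.2 = r.1.swap))).filter
        (fun r => ¬(r.2.1 = r.1.1 ∨ r.2.1 = r.1.2 ∨ r.2.2 = r.1.1 ∨ r.2.2 = r.1.2)), (cnt r : ℝ)
        ≤ m^2 * c4 := by
      refine le_trans (Finset.sum_le_card_nsmul _ _ c4 hb4pt) ?_
      rw [nsmul_eq_mul]
      have hcc : ((((I ×ˢ I).filter (fun r => ¬(r.2 = r.1 ∨ r.2 = r.1.swap))).filter
          (fun r => ¬(r.2.1 = r.1.1 ∨ r.2.1 = r.1.2 ∨ r.2.2 = r.1.1 ∨ r.2.2 = r.1.2))).card : ℝ)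
          ≤ m^2 := by
        rw [hmdef, sq]
        exact_mod_cast hcardC
      exact mul_le_mul_of_nonneg_right hcc hc4nn
    linarith

  -- exact ratio identities
  have h2k : 2 ≤ k := by omega
  have h3k : 3 ≤ k := by omega
  have h4k : 4 ≤ k := by omega
  have hr2 : c2 / (n.choose k : ℝ) = (((k:ℝ) - 1) * k) / (((n:ℝ) - 1) * n) := by
    rw [hc2, myRatio_eq h2k hkn, myDesc2 (show 1 ≤ k by omega), myDesc2 (show 1 ≤ n by omega)]
  have hr3 : c3 / (n.choose k : ℝ)
      = (((k:ℝ) - 2) * (((k:ℝ) - 1) * k)) / (((n:ℝ) - 2) * (((n:ℝ) - 1) * n)) := by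
    rw [hc3, myRatio_eq h3k hkn, myDesc3 (show 2 ≤ k by omega), myDesc3 (show 2 ≤ n by omega)]
  have hr4 : c4 / (n.choose k : ℝ)
      = (((k:ℝ) - 3) * (((k:ℝ) - 2) * (((k:ℝ) - 1) * k)))
        / (((n:ℝ) - 3) * (((n:ℝ) - 2) * (((n:ℝ) - 1) * n))) := by
    rw [hc4, myRatio_eq h4k hkn, myDesc4 (show 3 ≤ k by omega), myDesc4 (show 3 ≤ n by omega)]
  -- variance computation
  set μ : ℝ := m * c2 / (n.choose k : ℝ) with hμ
  have hvar : ∑ A ∈ Om, ((Z A : ℝ) - μ)^2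
      = (∑ A ∈ Om, (Z A:ℝ)^2) - m^2 * c2^2 / (n.choose k : ℝ) := by
    have hexp : ∀ A ∈ Om, ((Z A:ℝ) - μ)^2 = (Z A:ℝ)^2 - 2*μ*(Z A:ℝ) + μ^2 :=
      fun A _ => by ring
    rw [Finset.sum_congr rfl hexp, Finset.sum_add_distrib, Finset.sum_sub_distrib,
      ← Finset.mul_sum, hmom1, Finset.sum_const, nsmul_eq_mul, hOmcard]
    have hkey : 2*μ*(m*c2) - (n.choose k : ℝ)*μ^2 = m^2 * c2^2 / (n.choose k : ℝ) := by
      rw [hμ]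
      field_simp
      ring
    linarith
  -- c4 ≤ c2^2 / C(n,k)
  have hp4 : m^2 * c4 ≤ m^2 * c2^2 / (n.choose k : ℝ) := by
    have h1 : c4 / (n.choose k : ℝ) ≤ (c2 / (n.choose k : ℝ))^2 := by
      rw [hr4, hr2]
      exact myD4_le hk5R hknR
    have h2 : c4 ≤ c2^2 / (n.choose k : ℝ) := by
      have h3 := mul_le_mul_of_nonneg_right h1 hc0.le
      rw [div_mul_cancel₀ _ hc0.ne'] at h3
      calc c4 ≤ (c2 / (n.choose k : ℝ))^2 * (n.choose k : ℝ) := h3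
        _ = c2^2 / (n.choose k : ℝ) := by
            field_simp
    calc m^2 * c4 ≤ m^2 * (c2^2 / (n.choose k : ℝ)) :=
          mul_le_mul_of_nonneg_left h2 (sq_nonneg m)
      _ = m^2 * c2^2 / (n.choose k : ℝ) := by ring
  have hvar_le : ∑ A ∈ Om, ((Z A : ℝ) - μ)^2
      ≤ 2 * m * c2 + (2 * (d:ℝ) + 2 * (h':ℝ)) * m * c3 := by
    rw [hvar]
    linarith
  -- lower bound on μ
  have hmlow : 5 * a * (n:ℝ)^2 / (k:ℝ)^2 ≤ m := by
    have h1 : (5 * b^2 * (n:ℝ) / k) * ((n:ℝ) * b / k) ≤ (h':ℝ) * (d:ℝ) :=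
      mul_le_mul hh'low hdlow (by positivity) (by positivity)
    have h2 : (5 * b^2 * (n:ℝ) / k) * ((n:ℝ) * b / k) = 5 * (b^3) * (n:ℝ)^2 / (k:ℝ)^2 := by
      ring
    rw [h2, hb3] at h1
    rw [hmval]
    exact h1
  have hm2 : 5 * a * (n:ℝ)^2 ≤ m * (k:ℝ)^2 := by
    have := (div_le_iff₀ (by positivity : (0:ℝ) < (k:ℝ)^2)).mp hmlow
    linarith
  have hμ4 : 4 * a ≤ μ := by
    rw [hμ]
    have hc2val : c2 = (((k:ℝ) - 1) * k) / (((n:ℝ) - 1) * n) * (n.choose k : ℝ) := by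
      rw [← hr2]
      field_simp
    rw [hc2val]
    have hYpos : (0:ℝ) < ((n:ℝ) - 1) * n := mul_pos (by linarith only [hn5R]) hn0
    have heq : m * ((((k:ℝ) - 1) * k) / (((n:ℝ) - 1) * n) * (n.choose k : ℝ))
        / (n.choose k : ℝ) = m * (((k:ℝ) - 1) * k) / (((n:ℝ) - 1) * n) := by
      field_simp
    rw [heq, le_div_iff₀ hYpos]
    have h3 : 5 * a * (n:ℝ)^2 * ((k:ℝ) - 1) ≤ m * (k:ℝ)^2 * ((k:ℝ) - 1) :=
      mul_le_mul_of_nonneg_right hm2 (by linarith)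
    have h4 : (0:ℝ) ≤ a * (n:ℝ) * ((n:ℝ) * ((k:ℝ) - 5) + 4 * (k:ℝ)) := by
      apply mul_nonneg (mul_nonneg ha0.le hn0.le)
      have h5 : (0:ℝ) ≤ (n:ℝ) * ((k:ℝ) - 5) := mul_nonneg hn0.le (by linarith only [hk5R])
      linarith only [h5, hk0]
    apply le_of_mul_le_mul_right _ hk0
    linarith only [h3, h4]
  -- Chebyshev
  set T : Finset (Finset (Fin n)) := Om.filter (fun A => (Z A : ℝ) ≤ 2 * a) with hTdef
  have hpoint : ∀ A ∈ T, (2*a)^2 ≤ ((Z A:ℝ) - μ)^2 := by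
    intro A hA
    have hz := (mem_filter.mp hA).2
    have h1 : 2*a ≤ μ - (Z A:ℝ) := by linarith
    have h2 : (2*a)^2 ≤ (μ - (Z A:ℝ))^2 := pow_le_pow_left₀ (by positivity) h1 2
    calc (2*a)^2 ≤ (μ - (Z A:ℝ))^2 := h2
      _ = ((Z A:ℝ) - μ)^2 := by ring
  have hTsum : (T.card : ℝ) * (2*a)^2 ≤ ∑ A ∈ Om, ((Z A:ℝ) - μ)^2 := by
    have h1 := Finset.card_nsmul_le_sum T _ _ hpoint
    rw [nsmul_eq_mul] at h1
    have h2 : ∑ A ∈ T, ((Z A:ℝ) - μ)^2 ≤ ∑ A ∈ Om, ((Z A:ℝ) - μ)^2 := by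
      apply Finset.sum_le_sum_of_subset_of_nonneg (filter_subset _ _)
      intro A _ _
      exact sq_nonneg _
    linarith
  -- final assembly
  have hPset : {A : Finset (Fin n) | A.card = k ∧ edgeCount G A = ℓ k}
      = ((Om.filter (fun A => edgeCount G A = ℓ k)) : Set (Finset (Fin n))) := by
    ext A
    simp only [Set.mem_setOf_eq, Finset.coe_filter, hOm, Finset.mem_powersetCard_univ]
  have hsubT : (Om.filter (fun A => edgeCount G A = ℓ k)) ⊆ T := by
    intro A hA
    rw [mem_filter] at hA
    rw [hTdef, mem_filter]
    refine ⟨hA.1, ?_⟩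
    have h1 := hZedge A
    rw [hA.2] at h1
    have h2 : (Z A : ℝ) ≤ 2 * (ℓ k : ℝ) := by exact_mod_cast h1
    rw [ha]
    exact h2
  rw [uniformProb, hPset, Set.ncard_coe_finset]
  have hNe : ((Om.filter (fun A => edgeCount G A = ℓ k)).card : ℝ) ≤ (T.card : ℝ) := by
    exact_mod_cast card_le_card hsubT
  -- numeric bounds
  have hD2b : c2 / (n.choose k : ℝ) ≤ (k:ℝ)^2 / (n:ℝ)^2 := by
    rw [hr2]
    exact myD2_le hk5R hknR
  have hD3b : c3 / (n.choose k : ℝ) ≤ (k:ℝ)^3 / (n:ℝ)^3 := by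
    rw [hr3]
    exact myD3_le hk5R hknR
  have hD2nn : (0:ℝ) ≤ c2 / (n.choose k : ℝ) := by positivity
  have hD3nn : (0:ℝ) ≤ c3 / (n.choose k : ℝ) := by positivity
  have hmhigh : m ≤ 20 * a * (n:ℝ)^2 / (k:ℝ)^2 := by
    have h1 : (h':ℝ) * (d:ℝ) ≤ (2 * (5 * b ^ 2 * (n:ℝ) / k)) * (2 * ((n:ℝ) * b / k)) :=
      mul_le_mul hh'high hdhigh (by positivity) (by positivity)
    have h2 : (2 * (5 * b ^ 2 * (n:ℝ) / k)) * (2 * ((n:ℝ) * b / k))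
        = 20 * (b^3) * (n:ℝ)^2 / (k:ℝ)^2 := by ring
    rw [h2, hb3] at h1
    rw [hmval]
    exact h1
  have hdh : 2 * (d:ℝ) + 2 * (h':ℝ) ≤ 24 * b^2 * (n:ℝ) / k := by
    have h1 : (d:ℝ) ≤ 2 * ((n:ℝ) * b^2 / k) := by
      have hbb2 : b ≤ b^2 := by
        calc b = b * 1 := (mul_one b).symm
          _ ≤ b * b := mul_le_mul_of_nonneg_left hb1 hb0.le
          _ = b^2 := (sq b).symm
      have hbb : (n:ℝ) * b / k ≤ (n:ℝ) * b^2 / k := by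
        apply div_le_div_of_nonneg_right ?_ hk0.le
        exact mul_le_mul_of_nonneg_left hbb2 hn0.le
      linarith only [hbb, hdhigh]
    have h2 : 4 * ((n:ℝ) * b^2 / k) + 2 * (2 * (5 * b ^ 2 * (n:ℝ) / k))
        = 24 * b^2 * (n:ℝ) / k := by ring
    linarith
  have hW : (T.card : ℝ) * (4 * a^2) ≤ 2 * m * c2 + (2 * (d:ℝ) + 2 * (h':ℝ)) * m * c3 := by
    have h1 : (2*a)^2 = 4 * a^2 := by ring
    rw [← h1]
    exact le_trans hTsum hvar_le
  have hfrac1 : ((Om.filter (fun A => edgeCount G A = ℓ k)).card : ℝ) / (n.choose k : ℝ)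
      ≤ (T.card : ℝ) / (n.choose k : ℝ) := by
    apply div_le_div_of_nonneg_right hNe hc0.le
  set W' : ℝ := 2 * m * (c2 / (n.choose k : ℝ))
      + (2 * (d:ℝ) + 2 * (h':ℝ)) * m * (c3 / (n.choose k : ℝ)) with hW'
  have hfrac2 : (T.card : ℝ) / (n.choose k : ℝ) ≤ W' / (4 * a^2) := by
    rw [div_le_div_iff₀ hc0 (by positivity)]
    have h1 : W' * (n.choose k : ℝ)
        = 2 * m * c2 + (2 * (d:ℝ) + 2 * (h':ℝ)) * m * c3 := by
      rw [hW']
      field_simp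
    rw [h1]
    linarith only [hW]
  have ht1 : 2 * m * (c2 / (n.choose k : ℝ)) ≤ 40 * a := by
    have t1 : m * (c2 / (n.choose k : ℝ))
        ≤ (20 * a * (n:ℝ)^2 / (k:ℝ)^2) * ((k:ℝ)^2 / (n:ℝ)^2) :=
      mul_le_mul hmhigh hD2b hD2nn (by positivity)
    have e1 : (20 * a * (n:ℝ)^2 / (k:ℝ)^2) * ((k:ℝ)^2 / (n:ℝ)^2) = 20 * a := by
      field_simp
    rw [e1] at t1
    linarith
  have ht2 : (2 * (d:ℝ) + 2 * (h':ℝ)) * m * (c3 / (n.choose k : ℝ)) ≤ 480 * a * b^2 := by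
    have t2a : m * (c3 / (n.choose k : ℝ))
        ≤ (20 * a * (n:ℝ)^2 / (k:ℝ)^2) * ((k:ℝ)^3 / (n:ℝ)^3) :=
      mul_le_mul hmhigh hD3b hD3nn (by positivity)
    have t2 : (2 * (d:ℝ) + 2 * (h':ℝ)) * (m * (c3 / (n.choose k : ℝ)))
        ≤ (24 * b^2 * (n:ℝ) / k) * ((20 * a * (n:ℝ)^2 / (k:ℝ)^2) * ((k:ℝ)^3 / (n:ℝ)^3)) := by
      apply mul_le_mul hdh t2a (mul_nonneg hmnn hD3nn) (by positivity)
    have e2 : (24 * b^2 * (n:ℝ) / k) * ((20 * a * (n:ℝ)^2 / (k:ℝ)^2) * ((k:ℝ)^3 / (n:ℝ)^3))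
        = 480 * a * b^2 := by
      field_simp
      ring
    rw [e2] at t2
    linarith [t2]
  have hW'le : W' ≤ 520 * a * b^2 := by
    rw [hW']
    have h5 : (0:ℝ) ≤ a * (b^2 - 1) := mul_nonneg ha0.le (by linarith only [hb2one])
    linarith only [ht1, ht2, h5]
  have hfinal : W' / (4 * a^2) ≤ 130 / b := by
    have h1 : W' / (4 * a^2) ≤ (520 * a * b^2) / (4 * a^2) := by
      apply div_le_div_of_nonneg_right hW'le (by positivity)
    have h2 : (520 * a * b^2) / (4 * a^2) = 130 / b := by
      rw [← hb3]
      field_simp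
      ring
    rw [h2] at h1
    exact h1
  have hεfinal : 130 / b ≤ ε := by
    rw [div_le_iff₀ hb0]
    have := (div_le_iff₀ hε).mp hεb
    linarith
  calc ((Om.filter (fun A => edgeCount G A = ℓ k)).card : ℝ) / (n.choose k : ℝ)
      ≤ (T.card : ℝ) / (n.choose k : ℝ) := hfrac1
    _ ≤ W' / (4 * a^2) := hfrac2
    _ ≤ 130 / b := hfinal
    _ ≤ ε := hεfinal
end
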